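/- arXiv:1902.00902 — 3 statements merged into one kernel-verified Lean document; each statement's English description precedes it below -/
import Mathlib

section
/- Assume the standing assumptions on M_p and N_p, and let Γ ⊆ ℝⁿ be a nonempty closed convex acute cone with Γ ≠ {0}. Let f ∈ S'^{(M_p)}_{(N_p)}[Γ]. Let η₁, η₂ : ℝⁿ → ℝ be smooth functions such that for some ε₁, ε₂ > 0 one has η_i = 1 on Γ^{ε_i}, and η_i(ξ)e^{iz·ξ} ∈ S^{(M_p)}_{(N_p)}(ℝⁿ) for every z ∈ T^C (i = 1,2). Then ⟨f(ξ), η₁(ξ)e^{iz·ξ}⟩ = ⟨f(ξ), η₂(ξ)e^{iz·ξ}⟩ for every z ∈ T^C; i.e., the Laplace transform of f is well defined independently of the cutoff function. -/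
open scoped BigOperators
open Complex MeasureTheory Metric Filter

noncomputable section

/-- `ℝⁿ` as a Euclidean space. -/
abbrev Rn (n : ℕ) := EuclideanSpace ℝ (Fin n)
/-- `ℂⁿ` as a Euclidean space. -/
abbrev Cn (n : ℕ) := EuclideanSpace ℂ (Fin n)

/-- Real dot product `x·y`. -/
def rdot {n : ℕ} (x y : Rn n) : ℝ := ∑ i, x i * y i

/-- The pairing `z·ξ` of a complex vector with a real vector. -/
def cdot {n : ℕ} (z : Cn n) (ξ : Rn n) : ℂ := ∑ i, z i * (ξ i : ℂ)

/-- Imaginary part of a complex vector. -/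
def imPart {n : ℕ} (z : Cn n) : Rn n := WithLp.toLp 2 (fun i => (z i).im)
/-- Real part of a complex vector. -/
def rePart {n : ℕ} (z : Cn n) : Rn n := WithLp.toLp 2 (fun i => (z i).re)
/-- The complex vector `x + i y`. -/
def cmk {n : ℕ} (x y : Rn n) : Cn n := WithLp.toLp 2 (fun i => ⟨x i, y i⟩)

/-- Conjugate cone `Γ* = {y : y·u ≥ 0 ∀ u ∈ Γ}`. -/
def conjCone {n : ℕ} (Γ : Set (Rn n)) : Set (Rn n) := {y | ∀ u ∈ Γ, 0 ≤ rdot y u}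

/-- Tube domain `T^C = ℝⁿ + iC`. -/
def tube {n : ℕ} (C : Set (Rn n)) : Set (Cn n) := {z | imPart z ∈ C}

/-- Distance to the boundary of `C`. -/
def dB {n : ℕ} (C : Set (Rn n)) (y : Rn n) : ℝ := Metric.infDist y (frontier C)

/-- Associated function `M(t) = sup_p log (t^p M 0 / M p)`, `M(0) = 0`. -/
def assoc (M : ℕ → ℝ) (t : ℝ) : ℝ :=
  if t = 0 then 0 else ⨆ p : ℕ, Real.log (t ^ p * M 0 / M p)

/-- Cone with vertex at the origin. -/
def IsConeAt0 {n : ℕ} (Γ : Set (Rn n)) : Prop := ∀ x ∈ Γ, ∀ c : ℝ, 0 ≤ c → c • x ∈ Γ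

/-- `L_p = ℓ_1 ⋯ ℓ_p` (here indexed from `0`). -/
def Lprod (ℓ : ℕ → ℝ) (p : ℕ) : ℝ := ∏ j ∈ Finset.range p, ℓ j

variable {n : ℕ} {F : Type*} [NormedAddCommGroup F] [NormedSpace ℝ F]

/-- Partial derivative along coordinate `i`. -/
def pdv (i : Fin n) (f : Rn n → F) : Rn n → F :=
  fun x => fderiv ℝ f x (EuclideanSpace.single i 1)

/-- Multi-index partial derivative `∂^α`. -/
def mdv (α : Fin n → ℕ) (f : Rn n → F) : Rn n → F :=
  ((List.ofFn fun i : Fin n => (pdv i)^[α i]).foldr (· ∘ ·) id) f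

/-- Pointwise Gelfand–Shilov bound: `|t^β ∂^α φ(t)| ≤ C ℓ^{|α|+|β|} M_{|α|} N_{|β|}`. -/
def gsBound (M N : ℕ → ℝ) (ℓ C : ℝ) (φ : Rn n → ℂ) : Prop :=
  ∀ (α β : Fin n → ℕ) (t : Rn n),
    (∏ i, |t i| ^ β i) * ‖mdv α φ t‖ ≤
      C * ℓ ^ ((∑ i, α i) + ∑ i, β i) * M (∑ i, α i) * N (∑ i, β i)

/-- Membership in the Beurling Gelfand–Shilov space `S^{(M_p)}_{(N_p)}(ℝⁿ)`. -/
def gsMem (M N : ℕ → ℝ) (φ : Rn n → ℂ) : Prop :=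
  ContDiff ℝ (⊤ : ℕ∞) φ ∧ ∀ ℓ > (0:ℝ), ∃ C : ℝ, gsBound M N ℓ C φ

/-- The continuity estimate `|⟨f,φ⟩| ≤ C ‖φ‖_ℓ` for a functional `f`. -/
def ultraBdd (M N : ℕ → ℝ) (C ℓ : ℝ) (f : (Rn n → ℂ) →ₗ[ℂ] ℂ) : Prop :=
  ∀ φ, gsMem M N φ → ∀ B : ℝ, gsBound M N ℓ B φ → ‖f φ‖ ≤ C * B

/-- `f ∈ S'^{(M_p)}_{(N_p)}(ℝⁿ)`. -/
def isUltra (M N : ℕ → ℝ) (f : (Rn n → ℂ) →ₗ[ℂ] ℂ) : Prop :=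
  ∃ C > (0:ℝ), ∃ ℓ > (0:ℝ), ultraBdd M N C ℓ f

/-- `f` is supported in `Γ`. -/
def suppIn (M N : ℕ → ℝ) (Γ : Set (Rn n)) (f : (Rn n → ℂ) →ₗ[ℂ] ℂ) : Prop :=
  ∀ φ, gsMem M N φ → tsupport φ ∩ Γ = ∅ → f φ = 0

/-- Laplace transform `L{f}(z) = ⟨f(ξ), η(ξ) e^{iz·ξ}⟩` relative to a cutoff `η`. -/
def lap (η : Rn n → ℝ) (f : (Rn n → ℂ) →ₗ[ℂ] ℂ) (z : Cn n) : ℂ :=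
  f (fun ξ => (η ξ : ℂ) * Complex.exp (Complex.I * cdot z ξ))

/-- `η` is an admissible cutoff for the Laplace transform. -/
def isCutoff (M N : ℕ → ℝ) (Γ : Set (Rn n)) (C : Set (Rn n)) (η : Rn n → ℝ) : Prop :=
  ContDiff ℝ (⊤ : ℕ∞) η ∧ (∃ ε > (0:ℝ), ∀ ξ ∈ Metric.thickening ε Γ, η ξ = 1) ∧
  ∀ z ∈ tube C, gsMem M N (fun ξ => (η ξ : ℂ) * Complex.exp (Complex.I * cdot z ξ))

/-- `ψ ∈ D^{(M_p)}(ℝⁿ)`. -/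
def isUltraDiffCpt {n : ℕ} (M : ℕ → ℝ) (ψ : Rn n → ℂ) : Prop :=
  ContDiff ℝ (⊤ : ℕ∞) ψ ∧ HasCompactSupport ψ ∧
  ∀ h > (0:ℝ), ∃ C : ℝ, ∀ (α : Fin n → ℕ) (x : Rn n),
    ‖mdv α ψ x‖ ≤ C * h ^ (∑ i, α i) * M (∑ i, α i)

/-- Condition (M.1): log-convexity. -/
def M1cond (M : ℕ → ℝ) : Prop := ∀ p : ℕ, M (p+1) ^ 2 ≤ M p * M (p+2)
/-- Condition (M.2)'. -/
def M2'cond (M : ℕ → ℝ) : Prop := ∃ A ≥ (1:ℝ), ∃ H ≥ (1:ℝ), ∀ p : ℕ, M (p+1) ≤ A * H ^ p * M p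
/-- Condition (M.2). -/
def M2cond (M : ℕ → ℝ) : Prop :=
  ∃ A ≥ (1:ℝ), ∃ H ≥ (1:ℝ), ∀ p q : ℕ, M (p+q) ≤ A * H ^ (p+q) * M p * M q
/-- Condition (M.3)': `Σ M_{p-1}/M_p < ∞`. -/
def M3'cond (M : ℕ → ℝ) : Prop := Summable fun p : ℕ => M p / M (p+1)
/-- Condition (M.3): `Σ_{p≥q} M_{p-1}/M_p ≤ c₀ q M_{q-1}/M_q`. -/
def M3cond (M : ℕ → ℝ) : Prop :=
  ∃ c₀ > (0:ℝ), ∀ q : ℕ, (∑' j : ℕ, M (q+j) / M (q+j+1)) ≤ c₀ * (q+1) * (M q / M (q+1))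
/-- The sequence `M_p / p!`. -/
def fstar (M : ℕ → ℝ) : ℕ → ℝ := fun p => M p / p.factorial
/-- Condition (M.1)*: `M_p/p!` is log-convex. -/
def M1starCond (M : ℕ → ℝ) : Prop := M1cond (fstar M)
/-- `p! ≺ N_p`. -/
def factPrec (N : ℕ → ℝ) : Prop :=
  ∀ h > (0:ℝ), ∃ L > (0:ℝ), ∀ p : ℕ, (p.factorial : ℝ) ≤ L * h ^ p * N p

lemma pdv_smooth {n : ℕ} {f : Rn n → ℂ} (hf : ContDiff ℝ (⊤ : ℕ∞) f) (i : Fin n) :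
    ContDiff ℝ (⊤ : ℕ∞) (pdv i f) :=
  (hf.fderiv_right (m := (⊤ : ℕ∞)) (by simp)).clm_apply contDiff_const

lemma pdv_sub {n : ℕ} {f g : Rn n → ℂ} (hf : ContDiff ℝ (⊤ : ℕ∞) f) (hg : ContDiff ℝ (⊤ : ℕ∞) g) (i : Fin n) :
    pdv i (f - g) = pdv i f - pdv i g := by
  funext x
  have hfd : DifferentiableAt ℝ f x := hf.differentiable (by simp) x
  have hgd : DifferentiableAt ℝ g x := hg.differentiable (by simp) x
  simp only [pdv, Pi.sub_apply]
  rw [show (f - g) = fun y => f y - g y from rfl, fderiv_fun_sub hfd hgd]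
  simp

/-- Operators preserving smoothness and respecting subtraction of smooth functions. -/
def good {n : ℕ} (T : (Rn n → ℂ) → (Rn n → ℂ)) : Prop :=
  (∀ f, ContDiff ℝ (⊤ : ℕ∞) f → ContDiff ℝ (⊤ : ℕ∞) (T f)) ∧
  (∀ f g, ContDiff ℝ (⊤ : ℕ∞) f → ContDiff ℝ (⊤ : ℕ∞) g → T (f - g) = T f - T g)

lemma good_id {n : ℕ} : good (n := n) id := ⟨fun _ h => h, fun _ _ _ _ => rfl⟩

lemma good_comp {n : ℕ} {T S : (Rn n → ℂ) → (Rn n → ℂ)} (hT : good T) (hS : good S) :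
    good (T ∘ S) := by
  refine ⟨fun f hf => hT.1 _ (hS.1 _ hf), fun f g hf hg => ?_⟩
  simp only [Function.comp_apply, hS.2 f g hf hg, hT.2 _ _ (hS.1 _ hf) (hS.1 _ hg)]

lemma good_pdv_iter {n : ℕ} (i : Fin n) (k : ℕ) : good ((pdv i)^[k]) := by
  induction k with
  | zero => exact good_id
  | succ k ih =>
    constructor
    · intro f hf
      rw [Function.iterate_succ_apply']
      exact pdv_smooth (ih.1 f hf) i
    · intro f g hf hg
      rw [Function.iterate_succ_apply', Function.iterate_succ_apply',
        Function.iterate_succ_apply', ih.2 f g hf hg, pdv_sub (ih.1 f hf) (ih.1 g hg)]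

lemma good_foldr {n : ℕ} (L : List ((Rn n → ℂ) → (Rn n → ℂ))) (hL : ∀ T ∈ L, good T) :
    good (L.foldr (· ∘ ·) id) := by
  induction L with
  | nil => exact good_id
  | cons T L ih =>
    rw [List.foldr_cons]
    exact good_comp (hL T (by simp)) (ih fun S hS => hL S (by simp [hS]))

lemma good_mdv {n : ℕ} (α : Fin n → ℕ) : good (mdv (n := n) α) := by
  apply good_foldr
  intro T hT
  rw [List.mem_ofFn] at hT
  obtain ⟨i, rfl⟩ := hT
  exact good_pdv_iter i (α i)

lemma mdv_sub {n : ℕ} {f g : Rn n → ℂ} (hf : ContDiff ℝ (⊤ : ℕ∞) f) (hg : ContDiff ℝ (⊤ : ℕ∞) g)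
    (α : Fin n → ℕ) : mdv α (f - g) = mdv α f - mdv α g := (good_mdv α).2 f g hf hg

theorem gsMem_sub {n : ℕ} {M N : ℕ → ℝ} {φ ψ : Rn n → ℂ}
    (hφ : gsMem M N φ) (hψ : gsMem M N ψ) : gsMem M N (φ - ψ) := by
  refine ⟨hφ.1.sub hψ.1, fun ℓ hℓ => ?_⟩
  obtain ⟨C₁, hC₁⟩ := hφ.2 ℓ hℓ
  obtain ⟨C₂, hC₂⟩ := hψ.2 ℓ hℓ
  refine ⟨C₁ + C₂, fun α β t => ?_⟩
  have hsub := mdv_sub hφ.1 hψ.1 α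
  have hP : (0:ℝ) ≤ ∏ i, |t i| ^ β i :=
    Finset.prod_nonneg fun i _ => pow_nonneg (abs_nonneg _) _
  have h1 := hC₁ α β t
  have h2 := hC₂ α β t
  have hn : ‖mdv α (φ - ψ) t‖ ≤ ‖mdv α φ t‖ + ‖mdv α ψ t‖ := by
    rw [hsub]; exact norm_sub_le _ _
  calc (∏ i, |t i| ^ β i) * ‖mdv α (φ - ψ) t‖
      ≤ (∏ i, |t i| ^ β i) * (‖mdv α φ t‖ + ‖mdv α ψ t‖) :=
        mul_le_mul_of_nonneg_left hn hP
    _ = (∏ i, |t i| ^ β i) * ‖mdv α φ t‖ + (∏ i, |t i| ^ β i) * ‖mdv α ψ t‖ := by ring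
    _ ≤ (C₁ + C₂) * ℓ ^ ((∑ i, α i) + ∑ i, β i) * M (∑ i, α i) * N (∑ i, β i) := by
        have : (C₁ + C₂) * ℓ ^ ((∑ i, α i) + ∑ i, β i) * M (∑ i, α i) * N (∑ i, β i)
            = C₁ * ℓ ^ ((∑ i, α i) + ∑ i, β i) * M (∑ i, α i) * N (∑ i, β i)
            + C₂ * ℓ ^ ((∑ i, α i) + ∑ i, β i) * M (∑ i, α i) * N (∑ i, β i) := by ring
        rw [this]; exact add_le_add h1 h2

/-- the Laplace transform is well defined, i.e. independent of the
cutoff function (Beurling case). -/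
theorem stmt3 {n : ℕ} (M N : ℕ → ℝ)
    (hMpos : ∀ p, 0 < M p) (hM1 : M1cond M) (hM2' : M2'cond M) (hM3' : M3'cond M)
    (hNpos : ∀ p, 0 < N p) (hN1s : M1starCond N) (hN2 : M2cond N) (hNA : factPrec N)
    (Γ : Set (Rn n)) (hΓne : Γ.Nonempty) (hΓcl : IsClosed Γ)
    (hΓconv : Convex ℝ Γ) (hΓcone : IsConeAt0 Γ) (hΓ0 : Γ ≠ {0})
    (C : Set (Rn n)) (hC : C = interior (conjCone Γ)) (hCne : C.Nonempty)
    (f : (Rn n → ℂ) →ₗ[ℂ] ℂ) (hf : isUltra M N f) (hfsupp : suppIn M N Γ f)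
    (η₁ η₂ : Rn n → ℝ)
    (hη₁ : isCutoff M N Γ C η₁) (hη₂ : isCutoff M N Γ C η₂) :
    ∀ z ∈ tube C, lap η₁ f z = lap η₂ f z := by
  intro z hz
  set φ₁ : Rn n → ℂ := fun ξ => (η₁ ξ : ℂ) * Complex.exp (Complex.I * cdot z ξ) with hφ₁
  set φ₂ : Rn n → ℂ := fun ξ => (η₂ ξ : ℂ) * Complex.exp (Complex.I * cdot z ξ) with hφ₂
  have h₁ : gsMem M N φ₁ := hη₁.2.2 z hz
  have h₂ : gsMem M N φ₂ := hη₂.2.2 z hz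
  obtain ⟨ε₁, hε₁pos, hε₁⟩ := hη₁.2.1
  obtain ⟨ε₂, hε₂pos, hε₂⟩ := hη₂.2.1
  set ε := min ε₁ ε₂ with hε
  have hεpos : 0 < ε := lt_min hε₁pos hε₂pos
  have hzero : ∀ ξ ∈ Metric.thickening ε Γ, (φ₁ - φ₂) ξ = 0 := by
    intro ξ hξ
    have h1 : η₁ ξ = 1 := hε₁ ξ (Metric.thickening_mono (min_le_left _ _) Γ hξ)
    have h2 : η₂ ξ = 1 := hε₂ ξ (Metric.thickening_mono (min_le_right _ _) Γ hξ)
    simp [hφ₁, hφ₂, h1, h2]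
  have hts : tsupport (φ₁ - φ₂) ∩ Γ = ∅ := by
    have hsub : tsupport (φ₁ - φ₂) ⊆ (Metric.thickening ε Γ)ᶜ := by
      apply closure_minimal
      · intro x hx
        intro hmem
        exact hx (hzero x hmem)
      · exact (Metric.isOpen_thickening).isClosed_compl
    rw [Set.eq_empty_iff_forall_notMem]
    rintro x ⟨hx1, hx2⟩
    exact hsub hx1 (Metric.self_subset_thickening hεpos Γ hx2)
  have hf0 : f (φ₁ - φ₂) = 0 := hfsupp _ (gsMem_sub h₁ h₂) hts
  have : f φ₁ - f φ₂ = 0 := by rw [← map_sub]; exact hf0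
  exact sub_eq_zero.mp this
end
end

section
/- (Support lemma from the proof of Lemma 5.1.) Let Γ ⊆ ℝⁿ be a nonempty closed convex acute cone with Γ ≠ {0}, C := int Γ*. Let N_p and (ℓ_p) be sequences of positive reals with N*_{ℓ_p}(t) < ∞ for every t > 0. Let f : ℝⁿ → ℂ be continuous and suppose that for every ε > 0 there is L_ε > 0 such that |f(ξ)| ≤ L_ε exp(ξ·y + ε|y| + N*_{ℓ_p}(1/Δ_C(y))) for all ξ ∈ ℝⁿ and all y ∈ C. Then f(ξ) = 0 for every ξ ∉ Γ. -/
open scoped BigOperators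
open Complex MeasureTheory Metric Filter

noncomputable section

variable {n : ℕ} {F : Type*} [NormedAddCommGroup F] [NormedSpace ℝ F]

open scoped Pointwise

section Stmt12Aux

variable {n : ℕ}

lemma rdot_comm' (x y : Rn n) : rdot x y = rdot y x :=
  Finset.sum_congr rfl (fun i _ => mul_comm _ _)

lemma rdot_smul_left' (c : ℝ) (x y : Rn n) : rdot (c • x) y = c * rdot x y := by
  unfold rdot
  rw [Finset.mul_sum]
  exact Finset.sum_congr rfl fun i _ => by simp [PiLp.smul_apply]; ring

lemma rdot_smul_right' (c : ℝ) (x y : Rn n) : rdot x (c • y) = c * rdot x y := by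
  rw [rdot_comm', rdot_smul_left', rdot_comm']

lemma rdot_add_left' (x x' y : Rn n) : rdot (x + x') y = rdot x y + rdot x' y := by
  unfold rdot
  rw [← Finset.sum_add_distrib]
  exact Finset.sum_congr rfl fun i _ => by simp [PiLp.add_apply]; ring

lemma rdot_add_right' (x y y' : Rn n) : rdot x (y + y') = rdot x y + rdot x y' := by
  rw [rdot_comm', rdot_add_left', rdot_comm' y x, rdot_comm' y' x]

lemma rdot_zero_right' (x : Rn n) : rdot x 0 = 0 := by
  unfold rdot
  exact Finset.sum_eq_zero fun i _ => by simp

lemma euclid_decomp (x : Rn n) : x = ∑ i, x i • (EuclideanSpace.single i 1 : Rn n) := by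
  have h := (EuclideanSpace.basisFun (Fin n) ℝ).sum_repr x
  simp only [EuclideanSpace.basisFun_repr, EuclideanSpace.basisFun_apply] at h
  exact h.symm

lemma clm_eq_rdot (g : Rn n →L[ℝ] ℝ) :
    ∃ y : Rn n, ∀ x, g x = rdot x y := by
  refine ⟨(WithLp.toLp 2 (fun i => g (EuclideanSpace.single i 1)) : Rn n), fun x => ?_⟩
  conv_lhs => rw [euclid_decomp x]
  rw [map_sum]
  exact Finset.sum_congr rfl fun i _ => by simp [rdot]

end Stmt12Aux

/-- support lemma from the proof of Lemma 5.1. -/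
theorem stmt12 {n : ℕ} (Γ : Set (Rn n)) (hΓne : Γ.Nonempty) (hΓcl : IsClosed Γ)
    (hΓconv : Convex ℝ Γ) (hΓcone : IsConeAt0 Γ) (hΓ0 : Γ ≠ {0})
    (C : Set (Rn n)) (hC : C = interior (conjCone Γ)) (hCne : C.Nonempty)
    (N ℓ : ℕ → ℝ) (hNpos : ∀ p, 0 < N p) (hℓpos : ∀ p, 0 < ℓ p)
    (hfin : ∀ t > (0:ℝ), BddAbove (Set.range fun p : ℕ =>
      Real.log (t ^ p * (Lprod ℓ 0 * N 0 / Nat.factorial 0) /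
        (Lprod ℓ p * N p / p.factorial))))
    (f : Rn n → ℂ) (hfcont : Continuous f)
    (hbd : ∀ ε > (0:ℝ), ∃ L > (0:ℝ), ∀ (ξ : Rn n), ∀ y ∈ C,
      ‖f ξ‖ ≤ L * Real.exp (rdot ξ y + ε * ‖y‖ +
        assoc (fun p => Lprod ℓ p * N p / p.factorial) (1 / dB C y))) :
    ∀ ξ, ξ ∉ Γ → f ξ = 0 := by
  intro ξ hξ
  -- 0 ∈ Γ
  obtain ⟨x0, hx0⟩ := hΓne
  have h0Γ : (0 : Rn n) ∈ Γ := by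
    have := hΓcone x0 hx0 0 le_rfl
    simpa using this
  -- separation
  obtain ⟨g, u, hgξ, hgt⟩ := geometric_hahn_banach_point_closed hΓconv hΓcl hξ
  obtain ⟨y, hy⟩ := clm_eq_rdot g
  have hu0 : u < 0 := by
    have := hgt 0 h0Γ
    rwa [map_zero] at this
  have hyΓ : ∀ v ∈ Γ, 0 ≤ rdot y v := by
    intro v hv
    by_contra hneg
    push_neg at hneg
    have hc : 0 ≤ (u - 1) / rdot y v :=
      div_nonneg_iff.mpr (Or.inr ⟨by linarith, hneg.le⟩)
    have hmem := hΓcone v hv _ hc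
    have h2 := hgt _ hmem
    rw [hy, rdot_smul_left', rdot_comm' v y, div_mul_cancel₀ _ (ne_of_lt hneg)] at h2
    linarith
  have hyξ : rdot ξ y < 0 := by
    have := hy ξ
    linarith [hgξ, hu0, this.symm.le, this.le]
  -- conjCone is convex, scale invariant
  have hKconv : Convex ℝ (conjCone Γ) := by
    intro a ha b hb s t hs ht hst v hv
    have heq : rdot (s • a + t • b) v = s * rdot a v + t * rdot b v := by
      rw [rdot_add_left', rdot_smul_left', rdot_smul_left']
    show 0 ≤ rdot (s • a + t • b) v
    rw [heq]
    have := ha v hv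
    have := hb v hv
    positivity
  have hKsmul : ∀ c : ℝ, 0 < c → (c • (conjCone Γ) : Set (Rn n)) = conjCone Γ := by
    intro c hc
    ext z
    rw [Set.mem_smul_set_iff_inv_smul_mem₀ (ne_of_gt hc)]
    constructor
    · intro h v hv
      have h1 := h v hv
      rw [rdot_smul_left'] at h1
      have h2 := mul_nonneg hc.le h1
      rwa [mul_inv_cancel_left₀ (ne_of_gt hc)] at h2
    · intro h v hv
      show 0 ≤ rdot (c⁻¹ • z) v
      rw [rdot_smul_left']
      exact mul_nonneg (inv_pos.mpr hc).le (h v hv)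
  have hCopen : IsOpen C := by rw [hC]; exact isOpen_interior
  have hCsmul : ∀ c : ℝ, 0 < c → ∀ z ∈ C, c • z ∈ C := by
    intro c hc z hz
    rw [hC] at hz ⊢
    have h1 : c • z ∈ (c • interior (conjCone Γ) : Set (Rn n)) := Set.smul_mem_smul_set hz
    rwa [← interior_smul₀ (ne_of_gt hc), hKsmul c hc] at h1
  have hFsmul : ∀ c : ℝ, 0 < c → ∀ z ∈ frontier C, c • z ∈ frontier C := by
    intro c hc z hz
    have h1 : (c • frontier C : Set (Rn n)) = frontier (c • C) := by
      simpa using (Homeomorph.smulOfNeZero c (ne_of_gt hc)).image_frontier C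
    have h2 : (c • C : Set (Rn n)) = C := by
      rw [hC, ← interior_smul₀ (ne_of_gt hc), hKsmul c hc]
    have h3 : c • z ∈ (c • frontier C : Set (Rn n)) := Set.smul_mem_smul_set hz
    rwa [h1, h2] at h3
  -- build y₀ ∈ C with rdot ξ y₀ < 0
  obtain ⟨w, hw⟩ := hCne
  set a := rdot ξ w with ha
  set b := rdot ξ y with hbdef
  set s : ℝ := min 1 ((-b / 2) / (|a| + 1)) with hsdef
  have habs : (0:ℝ) ≤ |a| := abs_nonneg a
  have hs : 0 < s := by
    apply lt_min one_pos
    apply div_pos (by linarith) (by linarith)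
  have hswC : s • w ∈ C := hCsmul s hs w hw
  have hyK : y ∈ conjCone Γ := hyΓ
  set y₀ : Rn n := (1/2 : ℝ) • (s • w) + (1/2 : ℝ) • y with hy₀def
  have hy₀C : y₀ ∈ C := by
    rw [hC]
    have hswC' : s • w ∈ interior (conjCone Γ) := by rw [hC] at hswC; exact hswC
    have hseg : openSegment ℝ (s • w) y ⊆ interior (conjCone Γ) :=
      hKconv.openSegment_interior_closure_subset_interior hswC' (subset_closure hyK)
    exact hseg ⟨1/2, 1/2, by norm_num, by norm_num, by norm_num, rfl⟩
  have hsa : s * a ≤ -b / 2 := by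
    have h1 : s * (|a| + 1) ≤ -b / 2 := by
      have := min_le_right 1 ((-b / 2) / (|a| + 1))
      calc s * (|a| + 1) ≤ ((-b / 2) / (|a| + 1)) * (|a| + 1) := by
            apply mul_le_mul_of_nonneg_right (le_trans (le_refl s) this) (by linarith)
        _ = -b / 2 := div_mul_cancel₀ _ (by linarith)
    nlinarith [le_abs_self a, hs]
  have hy₀lt : rdot ξ y₀ < 0 := by
    rw [hy₀def, rdot_add_right', rdot_smul_right', rdot_smul_right', rdot_smul_right']
    rw [← ha, ← hbdef]
    nlinarith
  set c : ℝ := -(rdot ξ y₀) with hcdef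
  have hc : 0 < c := by linarith
  have hy₀ne : y₀ ≠ 0 := by
    intro h
    rw [h, rdot_zero_right'] at hy₀lt
    exact lt_irrefl 0 hy₀lt
  have hny : 0 < ‖y₀‖ := norm_pos_iff.mpr hy₀ne
  -- the weight sequence
  set M : ℕ → ℝ := fun p => Lprod ℓ p * N p / p.factorial with hM
  have hMpos : ∀ p, 0 < M p := by
    intro p
    simp only [hM]
    have h1 : 0 < Lprod ℓ p := Finset.prod_pos fun j _ => hℓpos j
    have h2 : (0:ℝ) < p.factorial := by exact_mod_cast p.factorial_pos
    exact div_pos (mul_pos h1 (hNpos p)) h2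
  have hfin' : ∀ t : ℝ, 0 < t →
      BddAbove (Set.range fun p : ℕ => Real.log (t ^ p * M 0 / M p)) := by
    intro t ht
    have := hfin t ht
    simp only [hM]
    exact this
  have hassoc_le : ∀ t u : ℝ, 0 < t → t ≤ u → assoc M t ≤ assoc M u := by
    intro t u ht htu
    have hu : 0 < u := lt_of_lt_of_le ht htu
    rw [assoc, assoc, if_neg (ne_of_gt ht), if_neg (ne_of_gt hu)]
    apply ciSup_mono (hfin' u hu)
    intro p
    apply Real.log_le_log
    · have := hMpos p
      have := hMpos 0
      positivity
    · have hnum : t ^ p * M 0 ≤ u ^ p * M 0 :=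
        mul_le_mul_of_nonneg_right (pow_le_pow_left₀ ht.le htu p) (hMpos 0).le
      exact (div_le_div_iff_of_pos_right (hMpos p)).mpr hnum
  -- distance scaling
  have hdB : ∀ l : ℝ, 0 < l → l * dB C y₀ ≤ dB C (l • y₀) := by
    intro l hl
    rcases (frontier C).eq_empty_or_nonempty with he | hne
    · simp [dB, he, Metric.infDist_empty]
    · show l * Metric.infDist y₀ (frontier C) ≤ Metric.infDist (l • y₀) (frontier C)
      by_contra hcon
      push_neg at hcon
      obtain ⟨t, htF, hdist⟩ := (Metric.infDist_lt_iff hne).mp hcon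
      have ht' : l⁻¹ • t ∈ frontier C := hFsmul l⁻¹ (inv_pos.mpr hl) t htF
      have hd : dist (l • y₀) t = l * dist y₀ (l⁻¹ • t) := by
        rw [dist_eq_norm, dist_eq_norm, ← smul_inv_smul₀ (ne_of_gt hl) t, ← smul_sub,
          smul_inv_smul₀ (ne_of_gt hl), norm_smul, Real.norm_eq_abs, abs_of_pos hl]
      have h2 : l * Metric.infDist y₀ (frontier C) ≤ dist (l • y₀) t := by
        rw [hd]
        exact mul_le_mul_of_nonneg_left (Metric.infDist_le_dist_of_mem ht') hl.le
      linarith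
  set d : ℝ := dB C y₀ with hddef
  set A : ℝ := assoc M (1 / d) with hAdef
  -- get the bound with ε := c / (2‖y₀‖)
  obtain ⟨L, hL, hbd'⟩ := hbd (c / (2 * ‖y₀‖)) (by positivity)
  have key : ∀ l : ℝ, 1 ≤ l → ‖f ξ‖ ≤ L * Real.exp (-(c/2) * l + A) := by
    intro l hl
    have hl0 : 0 < l := lt_of_lt_of_le one_pos hl
    have hyC : l • y₀ ∈ C := hCsmul l hl0 y₀ hy₀C
    refine (hbd' ξ (l • y₀) hyC).trans ?_
    apply mul_le_mul_of_nonneg_left _ hL.le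
    apply Real.exp_le_exp.mpr
    have hAterm : assoc M (1 / dB C (l • y₀)) ≤ A := by
      rcases (frontier C).eq_empty_or_nonempty with he | hne
      · have hz : dB C (l • y₀) = 0 := by simp [dB, he, Metric.infDist_empty]
        have hz' : d = 0 := by simp [hddef, dB, he, Metric.infDist_empty]
        rw [hz, hAdef, hz']
      · have hd0 : 0 < d := by
          rw [hddef]
          show 0 < Metric.infDist y₀ (frontier C)
          refine (isClosed_frontier.notMem_iff_infDist_pos hne).mp ?_
          intro hmem
          rw [hCopen.frontier_eq] at hmem
          exact hmem.2 hy₀C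
        have h1 : l * d ≤ dB C (l • y₀) := hdB l hl0
        have h2 : 0 < dB C (l • y₀) := lt_of_lt_of_le (by positivity) h1
        have h3 : 1 / dB C (l • y₀) ≤ 1 / d := by
          apply one_div_le_one_div_of_le hd0
          calc d = 1 * d := (one_mul d).symm
            _ ≤ l * d := mul_le_mul_of_nonneg_right hl hd0.le
            _ ≤ _ := h1
        exact hassoc_le _ _ (by positivity) h3
    have hr : rdot ξ (l • y₀) = -(l * c) := by
      rw [rdot_smul_right', hcdef]; ring
    have hn : ‖l • y₀‖ = l * ‖y₀‖ := by
      rw [norm_smul, Real.norm_eq_abs, abs_of_pos hl0]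
    rw [hr, hn]
    have hε : c / (2 * ‖y₀‖) * (l * ‖y₀‖) = c / 2 * l := by
      field_simp
    rw [hε]
    linarith
  -- take the limit l → ∞
  have htend : Tendsto (fun l : ℝ => L * Real.exp (-(c/2) * l + A)) atTop (nhds 0) := by
    rw [show (0:ℝ) = L * 0 by ring]
    apply Tendsto.const_mul
    apply Real.tendsto_exp_atBot.comp
    apply Filter.tendsto_atBot_add_const_right
    have hneg : -(c/2) < 0 := by linarith
    exact Filter.Tendsto.const_mul_atTop_of_neg hneg Filter.tendsto_id
  have hle : ‖f ξ‖ ≤ 0 :=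
    ge_of_tendsto htend (Filter.eventually_atTop.mpr ⟨1, key⟩)
  exact norm_le_zero_iff.mp hle
end
end

section
/- (Canonical-product lower bound on the right half-plane.) Let M_p be a sequence of positive reals, m_p := M_p/M_{p−1}, and let (ℓ_p) be a sequence of positive reals with Σ_{p≥1} 1/(ℓ_p m_p) < ∞. Then the infinite product P̃(z) := ∏_{p=1}^∞ (1 + z/(ℓ_p m_p)) converges locally uniformly on ℂ to an entire function, and for every z ∈ ℂ with Re z ≥ 0 one has |P̃(z)| ≥ exp(M_{ℓ_p}(|z|)). -/
open scoped BigOperators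
open Complex MeasureTheory Metric Filter

noncomputable section

variable {n : ℕ} {F : Type*} [NormedAddCommGroup F] [NormedSpace ℝ F]

open scoped Topology

/-- If summable reciprocals, the infinite product `∏ (1 + z / a p)` has a product. -/
lemma aux_hasProd (a : ℕ → ℝ) (ha : ∀ p, 0 < a p) (hs : Summable fun p => 1 / a p) (z : ℂ) :
    HasProd (fun p : ℕ => 1 + z / (a p : ℂ)) (∏' p : ℕ, (1 + z / (a p : ℂ))) := by
  by_cases h : ∀ p, (1 + z / (a p : ℂ)) ≠ 0
  · have h0 : Tendsto (fun p => 1 / a p) atTop (𝓝 0) := hs.tendsto_atTop_zero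
    have hev : ∀ᶠ p in atTop, ‖Complex.log (1 + z / (a p : ℂ))‖ ≤ (3/2) * (‖z‖ * (1 / a p)) := by
      have hsmall : ∀ᶠ p in atTop, 1 / a p ≤ 1 / (2 * (‖z‖ + 1)) := by
        have hpos : (0:ℝ) < 1 / (2 * (‖z‖ + 1)) := by positivity
        filter_upwards [h0.eventually (gt_mem_nhds hpos)] with p hp using le_of_lt hp
      filter_upwards [hsmall] with p hp
      have hn : ‖z / (a p : ℂ)‖ = ‖z‖ * (1 / a p) := by
        rw [norm_div, Complex.norm_real, Real.norm_eq_abs, abs_of_pos (ha p)]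
        ring
      have hhalf : ‖z / (a p : ℂ)‖ ≤ 1/2 := by
        rw [hn]
        have h1 : ‖z‖ * (1 / a p) ≤ ‖z‖ * (1 / (2 * (‖z‖ + 1))) :=
          mul_le_mul_of_nonneg_left hp (norm_nonneg z)
        refine h1.trans ?_
        rw [mul_one_div, div_le_div_iff₀ (by positivity) (by norm_num)]
        nlinarith [norm_nonneg z]
      calc ‖Complex.log (1 + z / (a p : ℂ))‖ ≤ (3/2) * ‖z / (a p : ℂ)‖ :=
            Complex.norm_log_one_add_half_le_self hhalf
        _ = (3/2) * (‖z‖ * (1 / a p)) := by rw [hn]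
    have hlog : Summable fun p => Complex.log (1 + z / (a p : ℂ)) :=
      Summable.of_norm_bounded_eventually_nat (((hs.mul_left ‖z‖).mul_left (3/2))) hev
    have := Complex.multipliable_of_summable_log hlog
    exact this.hasProd
  · push_neg at h
    obtain ⟨p, hp0⟩ := h
    have hzero : HasProd (fun p : ℕ => 1 + z / (a p : ℂ)) 0 := by
      have hev : (fun s : Finset ℕ => ∏ i ∈ s, (1 + z / (a i : ℂ))) =ᶠ[atTop] fun _ => 0 := by
        filter_upwards [eventually_ge_atTop ({p} : Finset ℕ)] with s hsub
        exact Finset.prod_eq_zero (hsub (Finset.mem_singleton_self p)) hp0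
      exact (tendsto_const_nhds.congr' hev.symm : _)
    exact hzero.multipliable.hasProd

/-- Uniform Cauchy on closed balls. -/
lemma aux_cauchy (a : ℕ → ℝ) (ha : ∀ p, 0 < a p) (hs : Summable fun p => 1 / a p) (R : ℝ) :
    UniformCauchySeqOn (fun (k : ℕ) (z : ℂ) => ∏ p ∈ Finset.range k, (1 + z / (a p : ℂ)))
      atTop (Metric.closedBall 0 R) := by
  set c : ℕ → ℝ := fun p => |R| / a p with hc
  have hcs : Summable c := by
    have := hs.mul_left |R|
    simpa [hc, div_eq_mul_inv, one_div] using this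
  have hcnn : ∀ p, 0 ≤ c p := fun p => div_nonneg (abs_nonneg R) (ha p).le
  set T := ∑' p, c p with hT
  set B := Real.exp T with hB
  have hBpos : 0 < B := Real.exp_pos T
  -- bound on partial products
  have hFb : ∀ (k : ℕ) (z : ℂ), z ∈ Metric.closedBall (0:ℂ) R →
      ‖∏ p ∈ Finset.range k, (1 + z / (a p : ℂ))‖ ≤ B := by
    intro k z hz
    have hzR : ‖z‖ ≤ |R| := by
      have := Metric.mem_closedBall.mp hz
      simpa [dist_eq_norm] using this.trans (le_abs_self R)
    calc ‖∏ p ∈ Finset.range k, (1 + z / (a p : ℂ))‖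
        = ∏ p ∈ Finset.range k, ‖1 + z / (a p : ℂ)‖ := norm_prod _ _
      _ ≤ ∏ p ∈ Finset.range k, Real.exp (c p) := by
          apply Finset.prod_le_prod (fun p _ => norm_nonneg _)
          intro p _
          have h1 : ‖1 + z / (a p : ℂ)‖ ≤ 1 + c p := by
            refine (norm_add_le _ _).trans ?_
            simp only [norm_one]
            gcongr
            rw [norm_div, Complex.norm_real, Real.norm_eq_abs, abs_of_pos (ha p)]
            exact div_le_div_of_nonneg_right hzR (ha p).le
          exact h1.trans (by linarith [Real.add_one_le_exp (c p)])
      _ = Real.exp (∑ p ∈ Finset.range k, c p) := (Real.exp_sum _ _).symm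
      _ ≤ B := Real.exp_le_exp.mpr (Summable.sum_le_tsum _ (fun p _ => hcnn p) hcs)
  rw [Metric.uniformCauchySeqOn_iff]
  intro ε hε
  -- Cauchy criterion on the partial sums of c
  have hcS : CauchySeq (fun n => ∑ p ∈ Finset.range n, c p) :=
    (hcs.hasSum.tendsto_sum_nat).cauchySeq
  obtain ⟨N, hN⟩ := Metric.cauchySeq_iff.mp hcS (ε / B) (by positivity)
  refine ⟨N, fun m hm n hn x hx => ?_⟩
  -- main estimate for n ≤ m
  have key : ∀ m n : ℕ, N ≤ n → n ≤ m →
      dist ((fun z => ∏ p ∈ Finset.range m, (1 + z / (a p : ℂ))) x)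
           ((fun z => ∏ p ∈ Finset.range n, (1 + z / (a p : ℂ))) x) < ε := by
    intro m n hNn hnm
    set F : ℕ → ℂ := fun k => ∏ p ∈ Finset.range k, (1 + x / (a p : ℂ)) with hF
    have htel : F m - F n = ∑ j ∈ Finset.Ico n m, (F (j+1) - F j) := by
      rw [Finset.sum_Ico_eq_sub _ hnm, Finset.sum_range_sub (f := F),
        Finset.sum_range_sub (f := F)]
      ring
    have hstep : ∀ j, F (j+1) - F j = F j * (x / (a j : ℂ)) := by
      intro j
      simp only [hF, Finset.prod_range_succ]
      ring
    have hxR : ‖x‖ ≤ |R| := by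
      have := Metric.mem_closedBall.mp hx
      simpa [dist_eq_norm] using this.trans (le_abs_self R)
    have hnorm : ‖F m - F n‖ ≤ B * ∑ j ∈ Finset.Ico n m, c j := by
      rw [htel]
      refine (norm_sum_le _ _).trans ?_
      rw [Finset.mul_sum]
      apply Finset.sum_le_sum
      intro j _
      rw [hstep j, norm_mul]
      have h1 : ‖F j‖ ≤ B := hFb j x hx
      have h2 : ‖x / (a j : ℂ)‖ ≤ c j := by
        rw [norm_div, Complex.norm_real, Real.norm_eq_abs, abs_of_pos (ha j)]
        exact div_le_div_of_nonneg_right hxR (ha j).le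
      exact mul_le_mul h1 h2 (norm_nonneg _) hBpos.le
    have hsum_small : ∑ j ∈ Finset.Ico n m, c j < ε / B := by
      have := hN m (hNn.trans hnm) n hNn
      rw [Real.dist_eq] at this
      have heq : ∑ j ∈ Finset.Ico n m, c j =
          (∑ p ∈ Finset.range m, c p) - ∑ p ∈ Finset.range n, c p :=
        Finset.sum_Ico_eq_sub _ hnm
      rw [heq]
      exact lt_of_le_of_lt (le_abs_self _) this
    rw [dist_eq_norm]
    calc ‖F m - F n‖ ≤ B * ∑ j ∈ Finset.Ico n m, c j := hnorm
      _ < B * (ε / B) := by exact (mul_lt_mul_iff_right₀ hBpos).mpr hsum_small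
      _ = ε := by field_simp
  rcases le_total n m with h | h
  · exact key m n hn h
  · rw [dist_comm]; exact key n m hm h

lemma aux_norm_facts {w : ℂ} (hw : 0 ≤ w.re) : 1 ≤ ‖1 + w‖ ∧ ‖w‖ ≤ ‖1 + w‖ := by
  have h1 : ‖1 + w‖ ^ 2 = (1 + w.re) ^ 2 + w.im ^ 2 := by
    rw [Complex.sq_norm, Complex.normSq_apply]
    simp only [Complex.add_re, Complex.add_im, Complex.one_re, Complex.one_im]
    ring
  have h2 : ‖w‖ ^ 2 = w.re ^ 2 + w.im ^ 2 := by
    rw [Complex.sq_norm, Complex.normSq_apply]; ring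
  constructor
  · nlinarith [norm_nonneg (1 + w), sq_nonneg w.im, sq_nonneg w.re]
  · nlinarith [norm_nonneg (1 + w), norm_nonneg w, sq_nonneg w.im, sq_nonneg w.re]


/-- canonical-product lower bound on the right half-plane. Here
`m p := M (p+1) / M p` plays the role of `m_{p+1} = M_{p+1}/M_p`. -/
theorem stmt15 (M ℓ : ℕ → ℝ) (hMpos : ∀ p, 0 < M p) (hℓpos : ∀ p, 0 < ℓ p)
    (hsum : Summable fun p : ℕ => 1 / (ℓ p * (M (p+1) / M p)))
    (P : ℂ → ℂ)
    (hP : P = fun z => ∏' p : ℕ, (1 + z / ((ℓ p * (M (p+1) / M p) : ℝ) : ℂ))) :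
    TendstoLocallyUniformly
      (fun (k : ℕ) (z : ℂ) => ∏ p ∈ Finset.range k,
        (1 + z / ((ℓ p * (M (p+1) / M p) : ℝ) : ℂ))) P atTop ∧
    Differentiable ℂ P ∧
    ∀ z : ℂ, 0 ≤ z.re →
      Real.exp (assoc (fun p => Lprod ℓ p * M p) ‖z‖) ≤ ‖P z‖ := by
  set a : ℕ → ℝ := fun p => ℓ p * (M (p+1) / M p) with ha_def
  have ha : ∀ p, 0 < a p := fun p => mul_pos (hℓpos p) (div_pos (hMpos _) (hMpos _))
  have hHP : ∀ z : ℂ, HasProd (fun p : ℕ => 1 + z / (a p : ℂ)) (P z) := by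
    intro z; rw [hP]; exact aux_hasProd a ha hsum z
  have hpt : ∀ z : ℂ, Tendsto (fun k => ∏ p ∈ Finset.range k, (1 + z / (a p : ℂ)))
      atTop (𝓝 (P z)) := fun z => (hHP z).tendsto_prod_nat
  have htlu : TendstoLocallyUniformly
      (fun (k : ℕ) (z : ℂ) => ∏ p ∈ Finset.range k, (1 + z / (a p : ℂ))) P atTop := by
    rw [tendstoLocallyUniformly_iff_forall_isCompact]
    intro K hK
    obtain ⟨R, hR⟩ := hK.isBounded.subset_closedBall 0
    exact (((aux_cauchy a ha hsum R).tendstoUniformlyOn_of_tendsto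
      (fun x _ => hpt x)).mono hR)
  refine ⟨htlu, ?_, ?_⟩
  · have hFd : ∀ k : ℕ, Differentiable ℂ
        (fun z : ℂ => ∏ p ∈ Finset.range k, (1 + z / (a p : ℂ))) := by
      intro k
      apply Differentiable.fun_finset_prod
      intro p _
      exact (differentiable_const _).add (differentiable_id.div_const _)
    have := (tendstoLocallyUniformlyOn_univ.mpr htlu).differentiableOn
      (Eventually.of_forall fun k => (hFd k).differentiableOn) isOpen_univ
    exact differentiableOn_univ.mp this
  · intro z hz
    by_cases hz0 : z = 0
    · subst hz0
      simp only [norm_zero, assoc, if_pos rfl, Real.exp_zero]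
      rw [hP]
      simp
    · have htz : (0:ℝ) < ‖z‖ := norm_pos_iff.mpr hz0
      -- per-factor facts
      have hfact : ∀ p, 1 ≤ ‖1 + z / (a p : ℂ)‖ ∧ ‖z‖ / a p ≤ ‖1 + z / (a p : ℂ)‖ := by
        intro p
        have hre : 0 ≤ (z / (a p : ℂ)).re := by
          rw [Complex.div_ofReal_re]
          exact div_nonneg hz (ha p).le
        obtain ⟨h1, h2⟩ := aux_norm_facts hre
        refine ⟨h1, ?_⟩
        refine le_trans (le_of_eq ?_) h2
        rw [norm_div, Complex.norm_real, Real.norm_eq_abs, abs_of_pos (ha p)]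
      -- product of a over range p
      have hLpos : ∀ p, 0 < Lprod ℓ p := fun p => Finset.prod_pos (fun j _ => hℓpos j)
      have hprod : ∀ p : ℕ, ∏ q ∈ Finset.range p, a q = Lprod ℓ p * (M p / M 0) := by
        intro p
        have hLsucc : ∀ q : ℕ, Lprod ℓ (q+1) = Lprod ℓ q * ℓ q := fun q =>
          Finset.prod_range_succ _ _
        induction p with
        | zero => simp [Lprod, div_self (hMpos 0).ne']
        | succ p ih =>
          rw [Finset.prod_range_succ, ih, hLsucc]
          simp only [ha_def]
          field_simp
          rw [div_eq_div_iff (mul_pos (hMpos p) (hMpos 0)).ne' (hMpos 0).ne']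
          ring
      -- key bound
      have hkey : ∀ p : ℕ, ‖z‖ ^ p * (Lprod ℓ 0 * M 0) / (Lprod ℓ p * M p) ≤ ‖P z‖ := by
        intro p
        have htend : Tendsto (fun s : Finset ℕ => ∏ i ∈ s, ‖1 + z / (a i : ℂ)‖)
            atTop (𝓝 ‖P z‖) := (hHP z).norm
        refine ge_of_tendsto htend ?_
        filter_upwards [eventually_ge_atTop (Finset.range p)] with s hsub
        have hsplit : ∏ i ∈ s, ‖1 + z / (a i : ℂ)‖ =
            (∏ i ∈ s \ Finset.range p, ‖1 + z / (a i : ℂ)‖) *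
            ∏ i ∈ Finset.range p, ‖1 + z / (a i : ℂ)‖ := (Finset.prod_sdiff hsub).symm
        rw [hsplit]
        have hb1 : (1:ℝ) ≤ ∏ i ∈ s \ Finset.range p, ‖1 + z / (a i : ℂ)‖ := by
          calc (1:ℝ) = ∏ _i ∈ s \ Finset.range p, (1:ℝ) := (Finset.prod_const_one).symm
            _ ≤ _ := Finset.prod_le_prod (fun i _ => zero_le_one) (fun i _ => (hfact i).1)
        have hb2 : ∏ i ∈ Finset.range p, (‖z‖ / a i) ≤
            ∏ i ∈ Finset.range p, ‖1 + z / (a i : ℂ)‖ :=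
          Finset.prod_le_prod (fun i _ => div_nonneg htz.le (ha i).le)
            (fun i _ => (hfact i).2)
        have heq : ∏ i ∈ Finset.range p, (‖z‖ / a i) =
            ‖z‖ ^ p * (Lprod ℓ 0 * M 0) / (Lprod ℓ p * M p) := by
          rw [Finset.prod_div_distrib, Finset.prod_const, hprod p]
          simp only [Lprod, Finset.range_zero, Finset.prod_empty, one_mul]
          rw [Finset.card_range]
          field_simp
        calc ‖z‖ ^ p * (Lprod ℓ 0 * M 0) / (Lprod ℓ p * M p)
            = ∏ i ∈ Finset.range p, (‖z‖ / a i) := heq.symm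
          _ ≤ ∏ i ∈ Finset.range p, ‖1 + z / (a i : ℂ)‖ := hb2
          _ = 1 * ∏ i ∈ Finset.range p, ‖1 + z / (a i : ℂ)‖ := (one_mul _).symm
          _ ≤ (∏ i ∈ s \ Finset.range p, ‖1 + z / (a i : ℂ)‖) *
              ∏ i ∈ Finset.range p, ‖1 + z / (a i : ℂ)‖ := by
              apply mul_le_mul_of_nonneg_right hb1
              exact Finset.prod_nonneg fun i _ => norm_nonneg _
      have hP1 : (1:ℝ) ≤ ‖P z‖ := by
        have := hkey 0
        simpa [Lprod, div_self (hMpos 0).ne'] using this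
      have hPpos : 0 < ‖P z‖ := lt_of_lt_of_le one_pos hP1
      rw [assoc, if_neg (ne_of_gt htz)]
      have hsup : (⨆ p : ℕ, Real.log (‖z‖ ^ p * (Lprod ℓ 0 * M 0) / (Lprod ℓ p * M p)))
          ≤ Real.log ‖P z‖ := by
        apply ciSup_le
        intro p
        have hxpos : 0 < ‖z‖ ^ p * (Lprod ℓ 0 * M 0) / (Lprod ℓ p * M p) := by
          have := hLpos p; have := hLpos 0; have := hMpos p; have := hMpos 0
          positivity
        exact Real.log_le_log hxpos (hkey p)
      calc Real.exp (⨆ p : ℕ, Real.log (‖z‖ ^ p * (Lprod ℓ 0 * M 0) / (Lprod ℓ p * M p)))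
          ≤ Real.exp (Real.log ‖P z‖) := Real.exp_le_exp.mpr hsup
        _ = ‖P z‖ := Real.exp_log hPpos
end
end
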